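/- Let (C, R, 𝓡) be a big-step semantics, 𝓡^wr its wrong semantics, 𝓡^? its partial-evaluation semantics, and ⇝ the one-step reduction relation on finite proof trees in 𝓡^?. Then ⊢_{𝓡^wr} c ⇒ wrong holds if and only if the single-node tree with root c ⇒ ? reduces in finitely many ⇝-steps to a stuck proof tree (a finite proof tree that is ⇝-irreducible and whose root result is ?). -/
import Mathlib


namespace BigStepMeta

universe u

/-- A judgment `c ⇒ r`: a configuration together with a result. -/
structure Judg (C : Type u) where
  conf : C
  res  : C

/-- A big-step rule: a conclusion configuration plus a nonempty finite list of premises.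
The last premise is the continuation; the conclusion judgment is `concl ⇒ (last premise).res`. -/
structure Rule (C : Type u) where
  concl : C
  premises : List (Judg C)
  ne : premises ≠ []

/-- The last premise (continuation) of a rule. -/
def Rule.lastJ {C : Type u} (ρ : Rule C) : Judg C := ρ.premises.getLast ρ.ne

/-- A big-step semantics `(C, R, 𝓡)`: configurations `C`, results `R ⊆ C`, rules `𝓡`. -/
structure BigStep (C : Type u) where
  R : Set C
  Rules : Set (Rule C)
  concl_not_res : ∀ ρ ∈ Rules, ρ.concl ∉ R
  prem_res : ∀ ρ ∈ Rules, ∀ j ∈ ρ.premises, j.res ∈ R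

variable {C : Type u}

/-- Condition BP: the number of premises of rules is bounded. -/
def BigStep.BP (S : BigStep C) : Prop :=
  ∃ b : ℕ, ∀ ρ ∈ S.Rules, ρ.premises.length ≤ b

/-- Inductive derivability `⊢_𝓡 c ⇒ r`: there is a finite proof tree.
For each result `r ∈ R` there is an implicit axiom `r ⇒ r`. -/
inductive Derives (S : BigStep C) : C → C → Prop
  | ax {r : C} : r ∈ S.R → Derives S r r
  | rule {ρ : Rule C} : ρ ∈ S.Rules →
      (∀ j ∈ ρ.premises, Derives S j.conf j.res) →
      Derives S ρ.concl ρ.lastJ.res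

/-! ## Traces -/

/-- A finite or infinite trace of configurations. -/
inductive Trace (C : Type u) where
  | fin : List C → Trace C
  | inf : (ℕ → C) → Trace C

/-- Concatenation of a finite list with an infinite sequence. -/
def appendInf (l : List C) (f : ℕ → C) : ℕ → C :=
  fun n => if h : n < l.length then l.get ⟨n, h⟩ else f (n - l.length)

/-- The finite trace `t_k · R(j_k)` associated to a premise and a chosen finite trace. -/
def finPart (p : Judg C × List C) : List C := p.2 ++ [p.1.res]

/-- The rule instances of the trace semantics `𝓡^tr`: a conclusion `c ⇒ t`
together with its list of premises. -/
inductive TrRule (S : BigStep C) : C → Trace C → List (C × Trace C) → Prop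
  | ax {r : C} : r ∈ S.R → TrRule S r (.fin [r]) []
  | intro {ρ : Rule C} {ts : List (List C)} :
      ρ ∈ S.Rules → ts.length = ρ.premises.length →
      TrRule S ρ.concl
        (.fin (ρ.concl :: ((ρ.premises.zip ts).map finPart).flatten))
        ((ρ.premises.zip ts).map (fun p => (p.1.conf, Trace.fin (finPart p))))
  | div {ρ : Rule C} {pre rest : List (Judg C)} {j : Judg C} {ts : List (List C)} {f : ℕ → C} :
      ρ ∈ S.Rules → ρ.premises = pre ++ j :: rest →
      ts.length = pre.length →
      TrRule S ρ.concl
        (.inf (appendInf (ρ.concl :: ((pre.zip ts).map finPart).flatten) f))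
        (((pre.zip ts).map (fun p => (p.1.conf, Trace.fin (finPart p)))) ++
          [(j.conf, Trace.inf f)])

/-- `⊢_{𝓡^tr} c ⇒ t` by a finite derivation (inductive interpretation of `𝓡^tr`). -/
inductive TrDerivesFin (S : BigStep C) : C → Trace C → Prop
  | step {c : C} {t : Trace C} {prems : List (C × Trace C)} :
      TrRule S c t prems →
      (∀ p ∈ prems, TrDerivesFin S p.1 p.2) →
      TrDerivesFin S c t

/-- `⊢_{𝓡^tr} c ⇒ t`: coinductive interpretation of `𝓡^tr`, i.e. existence of a possibly
infinite proof tree, expressed as membership in some backward-closed (consistent) relation. -/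
def TrDerives (S : BigStep C) (c : C) (t : Trace C) : Prop :=
  ∃ X : C → Trace C → Prop,
    (∀ c' t', X c' t' → ∃ prems, TrRule S c' t' prems ∧ ∀ p ∈ prems, X p.1 p.2) ∧
    X c t

/-! ## Wrong -/

/-- There is a rule with conclusion configuration `c`, first premises `pre`, whose next
premise has configuration `c'` and result `r` (i.e. a rule `ρ' ∼ᵢ ρ` with `R(ρ', i) = r`). -/
def HasContinuation (S : BigStep C) (c : C) (pre : List (Judg C)) (c' r : C) : Prop :=
  ∃ ρ' ∈ S.Rules, ∃ j' : Judg C, ∃ rest' : List (Judg C),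
    ρ'.premises = pre ++ j' :: rest' ∧ ρ'.concl = c ∧ j'.conf = c' ∧ j'.res = r

/-- Derivability in the wrong semantics `𝓡^wr`; `none` plays the role of `wrong`. -/
inductive DerivesW (S : BigStep C) : C → Option C → Prop
  | ax {r : C} : r ∈ S.R → DerivesW S r (some r)
  | rule {ρ : Rule C} : ρ ∈ S.Rules →
      (∀ j ∈ ρ.premises, DerivesW S j.conf (some j.res)) →
      DerivesW S ρ.concl (some ρ.lastJ.res)
  | wrong_intro {ρ : Rule C} {pre rest : List (Judg C)} {j : Judg C} {r : C} :
      ρ ∈ S.Rules → ρ.premises = pre ++ j :: rest → r ∈ S.R →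
      ¬ HasContinuation S ρ.concl pre j.conf r →
      (∀ j' ∈ pre, DerivesW S j'.conf (some j'.res)) →
      DerivesW S j.conf (some r) →
      DerivesW S ρ.concl none
  | wrong_ax {c : C} : c ∉ S.R → (¬ ∃ ρ ∈ S.Rules, ρ.concl = c) →
      DerivesW S c none
  | wrong_prop {ρ : Rule C} {pre rest : List (Judg C)} {j : Judg C} :
      ρ ∈ S.Rules → ρ.premises = pre ++ j :: rest →
      (∀ j' ∈ pre, DerivesW S j'.conf (some j'.res)) →
      DerivesW S j.conf none →
      DerivesW S ρ.concl none

/-! ## Indexed predicates and soundness conditions -/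

variable {I : Type u}

/-- `c ∈ Π`, i.e. `c ∈ Π_ι` for some index `ι`. -/
def InPred (P : I → Set C) (c : C) : Prop := ∃ i : I, c ∈ P i

/-- Condition S1 (local preservation). -/
def LocalPres (S : BigStep C) (P : I → Set C) : Prop :=
  ∀ ρ ∈ S.Rules, ∀ i : I, ρ.concl ∈ P i →
    ∃ f : ℕ → I, f (ρ.premises.length - 1) = i ∧
      ∀ (k : ℕ) (hk : k < ρ.premises.length),
        (∀ (h : ℕ) (hh : h < k), (ρ.premises.get ⟨h, hh.trans hk⟩).res ∈ P (f h)) →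
        (ρ.premises.get ⟨k, hk⟩).conf ∈ P (f k)

/-- Condition S2 (∃-progress). -/
def ExProgress (S : BigStep C) (P : I → Set C) : Prop :=
  ∀ c : C, InPred P c → c ∉ S.R → ∃ ρ ∈ S.Rules, ρ.concl = c

/-- Condition S3 (∀-progress). -/
def AllProgress (S : BigStep C) (P : I → Set C) : Prop :=
  ∀ ρ ∈ S.Rules, InPred P ρ.concl →
    ∀ (pre : List (Judg C)) (j : Judg C) (rest : List (Judg C)),
      ρ.premises = pre ++ j :: rest →
      (∀ j' ∈ pre, Derives S j'.conf j'.res) →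
      ∀ r ∈ S.R, Derives S j.conf r →
      HasContinuation S ρ.concl pre j.conf r

/-- Condition S4 (progress-may). -/
def ProgressMay (S : BigStep C) (P : I → Set C) : Prop :=
  ∀ c : C, InPred P c → c ∉ S.R →
    ∃ ρ ∈ S.Rules, ρ.concl = c ∧
      ∀ (pre : List (Judg C)) (j : Judg C) (rest : List (Judg C)),
        ρ.premises = pre ++ j :: rest →
        (∀ j' ∈ pre, Derives S j'.conf j'.res) →
        ¬ Derives S j.conf j.res →
        ¬ ∃ r : C, Derives S j.conf r

/-! ## Partial evaluation: the inference system `𝓡^?` -/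

/-- The rule instances of the partial-evaluation semantics `𝓡^?`; `none` plays the role
of the unknown result `?`. -/
inductive URule (S : BigStep C) : C → Option C → List (C × Option C) → Prop
  | ax {r : C} : r ∈ S.R → URule S r (some r) []
  | rule {ρ : Rule C} : ρ ∈ S.Rules →
      URule S ρ.concl (some ρ.lastJ.res) (ρ.premises.map (fun j => (j.conf, some j.res)))
  | unk_ax {c : C} : URule S c none []
  | unk {ρ : Rule C} {pre rest : List (Judg C)} {j : Judg C} {r : C} :
      ρ ∈ S.Rules → ρ.premises = pre ++ j :: rest → r ∈ S.R →
      URule S ρ.concl none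
        (pre.map (fun j' => (j'.conf, some j'.res)) ++ [(j.conf, some r)])
  | prop {ρ : Rule C} {pre rest : List (Judg C)} {j : Judg C} :
      ρ ∈ S.Rules → ρ.premises = pre ++ j :: rest →
      URule S ρ.concl none
        (pre.map (fun j' => (j'.conf, some j'.res)) ++ [(j.conf, none)])

/-! ## Possibly infinite trees as partial functions -/

/-- A (possibly infinite) tree labelled by judgments `c ⇒ u`, `u ∈ R ∪ {?}`, given as a
partial function on addresses (lists of positive naturals), with nonempty domain closed
under parents and left siblings. -/
structure PTree (C : Type u) where
  label : List ℕ+ → Option (C × Option C)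
  root_def : label [] ≠ none
  closed : ∀ (α : List ℕ+) (n : ℕ+), label (α ++ [n]) ≠ none → label α ≠ none
  siblings : ∀ (α : List ℕ+) (n k : ℕ+), k ≤ n →
    label (α ++ [n]) ≠ none → label (α ++ [k]) ≠ none

/-- `τ` is a proof tree in `𝓡^?`: at each node, the children are exactly the premises
of a rule of `𝓡^?` with the node's judgment as conclusion. -/
def PTree.IsProofTree (S : BigStep C) (τ : PTree C) : Prop :=
  ∀ (α : List ℕ+) (p : C × Option C), τ.label α = some p →
    ∃ prems : List (C × Option C), URule S p.1 p.2 prems ∧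
      ∀ n : ℕ+, τ.label (α ++ [n]) = prems[(n : ℕ) - 1]?

/-- The order `τ ⊑ τ'` on trees: larger domain, same configurations, and equal subtrees
at nodes whose result is already known (in `R`). -/
def PTree.LE (τ τ' : PTree C) : Prop :=
  ∀ (α : List ℕ+) (p : C × Option C), τ.label α = some p →
    ∃ p' : C × Option C, τ'.label α = some p' ∧ p.1 = p'.1 ∧
      (p.2 ≠ none → ∀ β : List ℕ+, τ.label (α ++ β) = τ'.label (α ++ β))

/-- A tree is finite if its domain is finite. -/
def PTree.Finite (τ : PTree C) : Prop := {α : List ℕ+ | τ.label α ≠ none}.Finite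

/-- A (typically infinite) proof tree is well-formed if at every level there is a node
labelled by an incomplete judgment, and subtrees rooted at complete judgments are finite. -/
def PTree.WellFormed (τ : PTree C) : Prop :=
  (∀ n : ℕ, ∃ (α : List ℕ+) (c : C), α.length = n ∧ τ.label α = some (c, none)) ∧
  (∀ (α : List ℕ+) (c r : C), τ.label α = some (c, some r) →
    {β : List ℕ+ | τ.label (α ++ β) ≠ none}.Finite)

/-! ## Finite proof trees and the reduction relation -/

/-- Finite trees labelled by judgments `c ⇒ u`, `u ∈ R ∪ {?}` (with `none` playing `?`). -/
inductive FTree (C : Type u) where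
  | node : C → Option C → List (FTree C) → FTree C

/-- The judgment at the root of a finite tree. -/
def FTree.judg : FTree C → C × Option C
  | .node c u _ => (c, u)

/-- `τ` is a finite proof tree in the partial-evaluation semantics `𝓡^?`. -/
inductive IsFPT (S : BigStep C) : FTree C → Prop
  | mk {c : C} {u : Option C} {l : List (FTree C)} :
      URule S c u (l.map FTree.judg) →
      (∀ τ ∈ l, IsFPT S τ) →
      IsFPT S (.node c u l)

/-- A finite proof tree is complete if all its judgments have results in `R`. -/
inductive FTree.Complete (S : BigStep C) : FTree C → Prop
  | mk {c : C} {r : C} {l : List (FTree C)} :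
      r ∈ S.R →
      (∀ τ ∈ l, FTree.Complete S τ) →
      FTree.Complete S (.node c (some r) l)

/-- The order `τ ⊑ τ'` on finite trees. -/
inductive FTreeLE : FTree C → FTree C → Prop
  | done {c r : C} {l : List (FTree C)} :
      FTreeLE (.node c (some r) l) (.node c (some r) l)
  | step {c : C} {u' : Option C} {l l₁ l₂ : List (FTree C)} :
      l.length = l₁.length →
      (∀ p ∈ l.zip l₁, FTreeLE p.1 p.2) →
      FTreeLE (.node c none l) (.node c u' (l₁ ++ l₂))

/-- The one-step reduction relation `⇝` on finite proof trees in `𝓡^?`. -/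
inductive Red (S : BigStep C) : FTree C → FTree C → Prop
  /-- The axiom `r ⇒ ?` (with `r ∈ R`) steps to the axiom `r ⇒ r`. -/
  | res {r : C} : r ∈ S.R → Red S (.node r none []) (.node r (some r) [])
  /-- The axiom `c ⇒ ?` steps, for a rule `ρ` with conclusion configuration `c`,
  to the tree applying `prop(ρ,1,?)` to the leaf `c' ⇒ ?`, `c'` the first premise
  configuration of `ρ`. -/
  | start {ρ : Rule C} {j : Judg C} {rest : List (Judg C)} :
      ρ ∈ S.Rules → ρ.premises = j :: rest →
      Red S (.node ρ.concl none []) (.node ρ.concl none [.node j.conf none []])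
  /-- A tree with root `c ⇒ ?` whose children are the first `i` premises of some
  `ρ' ∈ 𝓡` (with `#ρ' = i`, last premise result `r`) steps to the same tree with
  root `c ⇒ r`. -/
  | complete {ρ' : Rule C} {pre : List (Judg C)} {j' : Judg C} {l : List (FTree C)} :
      ρ' ∈ S.Rules → ρ'.premises = pre ++ [j'] →
      l.map FTree.judg = pre.map (fun j => (j.conf, some j.res)) ++ [(j'.conf, some j'.res)] →
      Red S (.node ρ'.concl none l) (.node ρ'.concl (some j'.res) l)
  /-- A tree with root `c ⇒ ?` whose children are the first `i` premises of some
  `ρ' ∈ 𝓡` having an `(i+1)`-th premise steps by adding the leaf for that premise's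
  configuration. -/
  | next {ρ' : Rule C} {pre rest : List (Judg C)} {j' j'' : Judg C} {l : List (FTree C)} :
      ρ' ∈ S.Rules → ρ'.premises = pre ++ j' :: j'' :: rest →
      l.map FTree.judg = pre.map (fun j => (j.conf, some j.res)) ++ [(j'.conf, some j'.res)] →
      Red S (.node ρ'.concl none l) (.node ρ'.concl none (l ++ [.node j''.conf none []]))
  /-- Propagation: a step of the last child is propagated. -/
  | inner {c : C} {l : List (FTree C)} {τ τ' : FTree C} :
      Red S τ τ' →
      Red S (.node c none (l ++ [τ])) (.node c none (l ++ [τ']))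



/-! ### Auxiliary lemmas for Statement 18 -/

section Statement18Aux

variable {C : Type u} {S : BigStep C}

private lemma jmap_inj : Function.Injective (fun j : Judg C => (j.conf, some j.res)) := by
  intro a b h
  cases a; cases b; simp_all

private lemma noRed_some {τ τ' : FTree C} {r : C} (h : τ.judg.2 = some r) :
    ¬ Red S τ τ' := by
  intro hr; cases hr <;> simp [FTree.judg] at h

private lemma red_conf {τ τ' : FTree C} (h : Red S τ τ') : τ.judg.1 = τ'.judg.1 := by
  cases h <;> rfl

private lemma reach_conf {τ τ' : FTree C} (h : Relation.ReflTransGen (Red S) τ τ') :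
    τ.judg.1 = τ'.judg.1 := by
  induction h with
  | refl => rfl
  | tail _ hstep ih => exact ih.trans (red_conf hstep)

private lemma innerLift {c : C} {l : List (FTree C)} {τ τ' : FTree C}
    (h : Relation.ReflTransGen (Red S) τ τ') :
    Relation.ReflTransGen (Red S) (.node c none (l ++ [τ])) (.node c none (l ++ [τ'])) := by
  induction h with
  | refl => exact .refl
  | tail _ hstep ih => exact ih.tail (Red.inner hstep)

private lemma map_judg_split {l : List (FTree C)} {A : List (C × Option C)} {b : C × Option C}
    (h : l.map FTree.judg = A ++ [b]) :
    ∃ l₁ τ, l = l₁ ++ [τ] ∧ l₁.map FTree.judg = A ∧ τ.judg = b := by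
  rcases List.map_eq_append_iff.mp h with ⟨l₁, l₂, rfl, h1, h2⟩
  rcases l₂ with _ | ⟨τ, l₂⟩
  · simp at h2
  · rcases l₂ with _ | ⟨τ₂, l₂⟩
    · refine ⟨l₁, τ, rfl, h1, ?_⟩
      simpa using h2
    · simp at h2

/-- A complete finite proof tree yields derivability of its root judgment in `𝓡^wr`. -/
private lemma completeDerives {τ : FTree C} (h : IsFPT S τ) :
    ∀ r : C, τ.judg.2 = some r → DerivesW S τ.judg.1 (some r) := by
  induction h with
  | @mk c u l hrule hch ih =>
    intro r hr
    simp only [FTree.judg] at hr ⊢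
    subst hr
    generalize hL : l.map FTree.judg = L at hrule
    cases hrule with
    | ax hR => exact DerivesW.ax hR
    | @rule ρ hρ =>
      refine DerivesW.rule hρ (fun j hj => ?_)
      have hmem : (j.conf, some j.res) ∈ l.map FTree.judg := by
        rw [hL]; exact List.mem_map.mpr ⟨j, hj, rfl⟩
      obtain ⟨τ', hτ', hjud⟩ := List.mem_map.mp hmem
      have hD := ih τ' hτ' j.res (by rw [hjud])
      rwa [show τ'.judg.1 = j.conf from by rw [hjud]] at hD

private lemma preDerives {l₁ : List (FTree C)} {pre : List (Judg C)}
    (hch : ∀ τ ∈ l₁, IsFPT S τ)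
    (h1 : l₁.map FTree.judg = pre.map (fun j' => (j'.conf, some j'.res))) :
    ∀ j' ∈ pre, DerivesW S j'.conf (some j'.res) := by
  intro j' hj'
  have hmem : (j'.conf, some j'.res) ∈ l₁.map FTree.judg := by
    rw [h1]; exact List.mem_map.mpr ⟨j', hj', rfl⟩
  obtain ⟨τ', hτ', hjud⟩ := List.mem_map.mp hmem
  have hD := completeDerives (hch τ' hτ') j'.res (by rw [hjud])
  rwa [show τ'.judg.1 = j'.conf from by rw [hjud]] at hD

/-! #### Stuckness lemmas -/

private lemma stuck_leaf {c : C} (hcR : c ∉ S.R) (hno : ¬ ∃ ρ ∈ S.Rules, ρ.concl = c) :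
    ∀ τ', ¬ Red S (.node c none []) τ' := by
  intro τ' h
  generalize hT : (FTree.node c none [] : FTree C) = T at h
  cases h with
  | res hR =>
    simp only [FTree.node.injEq] at hT
    exact hcR (hT.1 ▸ hR)
  | start hρ hp =>
    simp only [FTree.node.injEq] at hT
    exact hno ⟨_, hρ, hT.1.symm⟩
  | complete hρ hp hm =>
    simp only [FTree.node.injEq] at hT
    rw [← hT.2.2] at hm; simp at hm
  | next hρ hp hm =>
    simp only [FTree.node.injEq] at hT
    rw [← hT.2.2] at hm; simp at hm
  | inner hred =>
    simp only [FTree.node.injEq] at hT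
    have := hT.2.2; simp at this

private lemma stuck_unk {ρ : Rule C} {pre : List (Judg C)} {j : Judg C} {r : C}
    (hnc : ¬ HasContinuation S ρ.concl pre j.conf r)
    {l : List (FTree C)}
    (hmap : l.map FTree.judg = pre.map (fun j' => (j'.conf, some j'.res)) ++ [(j.conf, some r)]) :
    ∀ τ', ¬ Red S (.node ρ.concl none l) τ' := by
  intro τ' h
  generalize hT : (FTree.node ρ.concl none l : FTree C) = T at h
  cases h with
  | res hR =>
    simp only [FTree.node.injEq] at hT
    rw [hT.2.2] at hmap; simp at hmap
  | start hρ0 hp0 =>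
    simp only [FTree.node.injEq] at hT
    rw [hT.2.2] at hmap; simp at hmap
  | @complete ρ0 pre0 j0 l0 hρ0 hp0 hm0 =>
    simp only [FTree.node.injEq] at hT
    obtain ⟨hc0, -, hl0⟩ := hT
    rw [hl0] at hmap
    have h2 := hm0.symm.trans hmap
    obtain ⟨hpe, hje⟩ := List.append_inj' h2 rfl
    have hpre0 : pre0 = pre := (List.map_injective_iff.mpr jmap_inj) hpe
    simp only [List.cons.injEq, Prod.mk.injEq, Option.some.injEq, and_true] at hje
    exact hnc ⟨ρ0, hρ0, j0, [], by rw [hp0, hpre0], hc0.symm, hje.1, hje.2⟩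
  | @next ρ0 pre0 rest0 j0 j1 l0 hρ0 hp0 hm0 =>
    simp only [FTree.node.injEq] at hT
    obtain ⟨hc0, -, hl0⟩ := hT
    rw [hl0] at hmap
    have h2 := hm0.symm.trans hmap
    obtain ⟨hpe, hje⟩ := List.append_inj' h2 rfl
    have hpre0 : pre0 = pre := (List.map_injective_iff.mpr jmap_inj) hpe
    simp only [List.cons.injEq, Prod.mk.injEq, Option.some.injEq, and_true] at hje
    exact hnc ⟨ρ0, hρ0, j0, j1 :: rest0, by rw [hp0, hpre0], hc0.symm, hje.1, hje.2⟩
  | @inner c0 l0 τ0 τ0' hred =>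
    simp only [FTree.node.injEq] at hT
    obtain ⟨-, -, hl0⟩ := hT
    rw [hl0, List.map_append] at hmap
    obtain ⟨-, hje⟩ := List.append_inj' hmap (by simp)
    simp only [List.map_cons, List.map_nil, List.cons.injEq, and_true] at hje
    exact noRed_some (by rw [hje]) hred

private lemma stuck_last_none {c0 : C} {l : List (FTree C)} {τw : FTree C}
    (hw : ∀ τ', ¬ Red S τw τ') (hwn : τw.judg.2 = none) :
    ∀ τ', ¬ Red S (.node c0 none (l ++ [τw])) τ' := by
  intro τ' h
  generalize hT : (FTree.node c0 none (l ++ [τw]) : FTree C) = T at h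
  cases h with
  | res hR =>
    simp only [FTree.node.injEq] at hT
    have := hT.2.2; simp at this
  | start hρ0 hp0 =>
    simp only [FTree.node.injEq] at hT
    have := hT.2.2; simp at this
  | @complete ρ0 pre0 j0 l0 hρ0 hp0 hm0 =>
    simp only [FTree.node.injEq] at hT
    rw [← hT.2.2, List.map_append] at hm0
    obtain ⟨-, hje⟩ := List.append_inj' hm0 (by simp)
    simp only [List.map_cons, List.map_nil, List.cons.injEq, and_true] at hje
    rw [hje] at hwn; simp at hwn
  | @next ρ0 pre0 rest0 j0 j1 l0 hρ0 hp0 hm0 =>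
    simp only [FTree.node.injEq] at hT
    rw [← hT.2.2, List.map_append] at hm0
    obtain ⟨-, hje⟩ := List.append_inj' hm0 (by simp)
    simp only [List.map_cons, List.map_nil, List.cons.injEq, and_true] at hje
    rw [hje] at hwn; simp at hwn
  | @inner c1 l0 τ0 τ0' hred =>
    simp only [FTree.node.injEq] at hT
    obtain ⟨-, -, hl0⟩ := hT
    obtain ⟨-, hje⟩ := List.append_inj' hl0 rfl
    simp only [List.cons.injEq, and_true] at hje
    exact hw _ (hje ▸ hred)

/-! #### Building reductions -/

private lemma buildPre {ρ : Rule C} (hρ : ρ ∈ S.Rules) :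
    ∀ (pre : List (Judg C)) (j : Judg C) (rest : List (Judg C)),
      ρ.premises = pre ++ j :: rest →
      (∀ j' ∈ pre, ∃ τ : FTree C, Relation.ReflTransGen (Red S) (.node j'.conf none []) τ ∧
        IsFPT S τ ∧ τ.judg = (j'.conf, some j'.res)) →
      ∃ τs : List (FTree C),
        Relation.ReflTransGen (Red S) (.node ρ.concl none [])
          (.node ρ.concl none (τs ++ [.node j.conf none []])) ∧
        τs.map FTree.judg = pre.map (fun j' => (j'.conf, some j'.res)) ∧
        ∀ τ ∈ τs, IsFPT S τ := by
  intro pre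
  induction pre using List.reverseRecOn with
  | nil =>
    intro j rest hsp _
    exact ⟨[], Relation.ReflTransGen.single (Red.start hρ hsp), by simp, by simp⟩
  | append_singleton pre' jp ih =>
    intro j rest hsp hder
    obtain ⟨τs, hreach, hmap, hfpt⟩ := ih jp (j :: rest) (by simpa using hsp)
      (fun a ha => hder a (by simp [ha]))
    obtain ⟨τL, hreachL, hfptL, hjudgL⟩ := hder jp (by simp)
    refine ⟨τs ++ [τL], ?_, by simp [hmap, hjudgL], ?_⟩
    · have hstep : Red S (.node ρ.concl none (τs ++ [τL]))
          (.node ρ.concl none ((τs ++ [τL]) ++ [.node j.conf none []])) :=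
        Red.next hρ (by simpa using hsp) (by simp [hmap, hjudgL])
      exact ((hreach.trans (innerLift hreachL)).tail hstep)
    · intro τ hτ
      rcases List.mem_append.mp hτ with h | h
      · exact hfpt τ h
      · rw [List.mem_singleton.mp h]; exact hfptL

private lemma derivesSomeRed {c : C} {u : Option C} (h : DerivesW S c u) :
    ∀ r : C, u = some r → ∃ τ : FTree C,
      Relation.ReflTransGen (Red S) (.node c none []) τ ∧ IsFPT S τ ∧
      τ.judg = (c, some r) := by
  induction h with
  | @ax r0 hR =>
    intro r hr
    obtain rfl : r0 = r := by injection hr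
    exact ⟨.node r0 (some r0) [], Relation.ReflTransGen.single (Red.res hR),
      IsFPT.mk (URule.ax hR) (by simp), rfl⟩
  | @rule ρ hρ hprem ih =>
    intro r hr
    obtain rfl : ρ.lastJ.res = r := by injection hr
    have hsp : ρ.premises = ρ.premises.dropLast ++ [ρ.premises.getLast ρ.ne] :=
      (List.dropLast_append_getLast ρ.ne).symm
    obtain ⟨τs, hreach, hmap, hfpt⟩ := buildPre hρ ρ.premises.dropLast
      (ρ.premises.getLast ρ.ne) [] hsp
      (fun j' hj' => ih j' (List.dropLast_subset _ hj') j'.res rfl)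
    obtain ⟨τL, hreachL, hfptL, hjudgL⟩ :=
      ih (ρ.premises.getLast ρ.ne) (List.getLast_mem ρ.ne) _ rfl
    refine ⟨.node ρ.concl (some ρ.lastJ.res) (τs ++ [τL]), ?_, ?_, rfl⟩
    · exact ((hreach.trans (innerLift hreachL)).tail
        (Red.complete hρ hsp (by simp [hmap, hjudgL, Rule.lastJ])))
    · refine IsFPT.mk ?_ ?_
      · rw [show (τs ++ [τL]).map FTree.judg
            = ρ.premises.map (fun j => (j.conf, some j.res)) from by
          conv_rhs => rw [hsp]
          simp [hmap, hjudgL]]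
        exact URule.rule hρ
      · intro τ hτ
        rcases List.mem_append.mp hτ with h | h
        · exact hfpt τ h
        · rw [List.mem_singleton.mp h]; exact hfptL
  | wrong_intro _ _ _ _ _ _ _ _ => intro r hr; simp at hr
  | wrong_ax _ _ => intro r hr; simp at hr
  | wrong_prop _ _ _ _ _ _ => intro r hr; simp at hr

private lemma derivesNoneRed {c : C} {u : Option C} (h : DerivesW S c u) :
    u = none → ∃ τ : FTree C,
      Relation.ReflTransGen (Red S) (.node c none []) τ ∧ IsFPT S τ ∧
      (∀ τ', ¬ Red S τ τ') ∧ τ.judg.2 = none := by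
  induction h with
  | ax _ => intro hr; simp at hr
  | rule _ _ _ => intro hr; simp at hr
  | @wrong_intro ρ pre rest j r hρ hsp hrR hnc hpre hj ihpre ihj =>
    intro _
    obtain ⟨τs, hreach, hmap, hfpt⟩ := buildPre hρ pre j rest hsp
      (fun j' hj' => derivesSomeRed (hpre j' hj') j'.res rfl)
    obtain ⟨τr, hreachr, hfptr, hjudgr⟩ := derivesSomeRed hj r rfl
    refine ⟨.node ρ.concl none (τs ++ [τr]), hreach.trans (innerLift hreachr), ?_,
      stuck_unk hnc (by simp [hmap, hjudgr]), rfl⟩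
    refine IsFPT.mk ?_ ?_
    · rw [show (τs ++ [τr]).map FTree.judg
          = pre.map (fun j' => (j'.conf, some j'.res)) ++ [(j.conf, some r)] from by
        simp [hmap, hjudgr]]
      exact URule.unk hρ hsp hrR
    · intro τ hτ
      rcases List.mem_append.mp hτ with h | h
      · exact hfpt τ h
      · rw [List.mem_singleton.mp h]; exact hfptr
  | @wrong_ax c0 hcR hno =>
    intro _
    exact ⟨.node c0 none [], Relation.ReflTransGen.refl,
      IsFPT.mk URule.unk_ax (by simp), stuck_leaf hcR hno, rfl⟩
  | @wrong_prop ρ pre rest j hρ hsp hpre hjw ihpre ihw =>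
    intro _
    obtain ⟨τs, hreach, hmap, hfpt⟩ := buildPre hρ pre j rest hsp
      (fun j' hj' => derivesSomeRed (hpre j' hj') j'.res rfl)
    obtain ⟨τw, hreachw, hfptw, hstuckw, hwn⟩ := ihw rfl
    have h1 : j.conf = τw.judg.1 := reach_conf hreachw
    have hjd : τw.judg = (j.conf, none) := Prod.ext h1.symm hwn
    refine ⟨.node ρ.concl none (τs ++ [τw]), hreach.trans (innerLift hreachw), ?_,
      stuck_last_none hstuckw hwn, rfl⟩
    refine IsFPT.mk ?_ ?_
    · rw [show (τs ++ [τw]).map FTree.judg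
          = pre.map (fun j' => (j'.conf, some j'.res)) ++ [(j.conf, none)] from by
        simp [hmap, hjd]]
      exact URule.prop hρ hsp
    · intro τ hτ
      rcases List.mem_append.mp hτ with h | h
      · exact hfpt τ h
      · rw [List.mem_singleton.mp h]; exact hfptw

/-! #### From stuck trees to wrong -/

private lemma stuckDerivesWrong {τ : FTree C} (h : IsFPT S τ) :
    (∀ τ', ¬ Red S τ τ') → τ.judg.2 = none → DerivesW S τ.judg.1 none := by
  induction h with
  | @mk c u l hrule hch ih =>
    intro hirr hnone
    simp only [FTree.judg] at hnone ⊢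
    subst hnone
    generalize hL : l.map FTree.judg = L at hrule
    cases hrule with
    | unk_ax =>
      have hl : l = [] := List.map_eq_nil_iff.mp hL
      subst hl
      refine DerivesW.wrong_ax ?_ ?_
      · intro hc; exact hirr _ (Red.res hc)
      · rintro ⟨ρ, hρ, hc⟩
        obtain ⟨j, rest, hp⟩ : ∃ j rest, ρ.premises = j :: rest := by
          cases hp : ρ.premises with
          | nil => exact absurd hp ρ.ne
          | cons a b => exact ⟨a, b, rfl⟩
        have hstep := Red.start hρ hp
        rw [hc] at hstep
        exact hirr _ hstep
    | @unk ρ pre rest j r hρ hsp hrR =>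
      obtain ⟨l₁, τr, rfl, h1, hjr⟩ := map_judg_split hL
      have hpreD := preDerives (fun τ hτ => hch τ (by simp [hτ])) h1
      have hjD : DerivesW S j.conf (some r) := by
        have hD := completeDerives (hch τr (by simp)) r (by rw [hjr])
        rwa [show τr.judg.1 = j.conf from by rw [hjr]] at hD
      refine DerivesW.wrong_intro hρ hsp hrR ?_ hpreD hjD
      rintro ⟨ρ', hρ', j', rest', hsp', hcl', hcf', hres'⟩
      have hmap' : (l₁ ++ [τr]).map FTree.judg
          = pre.map (fun j0 => (j0.conf, some j0.res)) ++ [(j'.conf, some j'.res)] := by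
        rw [hcf', hres']
        exact hL
      cases rest' with
      | nil =>
        have hstep := Red.complete hρ' hsp' hmap'
        rw [hcl'] at hstep
        exact hirr _ hstep
      | cons j2 rest2 =>
        have hstep := Red.next hρ' hsp' hmap'
        rw [hcl'] at hstep
        exact hirr _ hstep
    | @prop ρ pre rest j hρ hsp =>
      obtain ⟨l₁, τw, rfl, h1, hjw⟩ := map_judg_split hL
      have hpreD := preDerives (fun τ hτ => hch τ (by simp [hτ])) h1
      have hwIrr : ∀ τ', ¬ Red S τw τ' := fun τ' hr => hirr _ (Red.inner hr)
      have hwD := ih τw (by simp) hwIrr (by rw [hjw])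
      rw [show τw.judg.1 = j.conf from by rw [hjw]] at hwD
      exact DerivesW.wrong_prop hρ hsp hpreD hwD

end Statement18Aux

/-- Theorem `eq-wrong-unknown`: `⊢_{𝓡^wr} c ⇒ wrong` iff the
single-node tree with root `c ⇒ ?` reduces in finitely many `⇝`-steps to a stuck
proof tree (a finite proof tree that is `⇝`-irreducible with root result `?`). -/
theorem statement18 {C : Type u} (S : BigStep C) (c : C) :
    DerivesW S c none ↔
      ∃ τ : FTree C, Relation.ReflTransGen (Red S) (FTree.node c none []) τ ∧
        IsFPT S τ ∧ (∀ τ' : FTree C, ¬ Red S τ τ') ∧ τ.judg.2 = none := by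
  constructor
  · intro h
    exact derivesNoneRed h rfl
  · rintro ⟨τ, hreach, hfpt, hirr, hnone⟩
    have h1 : c = τ.judg.1 := reach_conf hreach
    rw [h1]
    exact stuckDerivesWrong hfpt hirr hnone

end BigStepMeta
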